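/- arXiv:2008.04123 — 2 statements merged into one kernel-verified Lean document; each statement's English description precedes it below -/
import Mathlib

section
/- Let G be a finite non-abelian group, H a subgroup of G, and g ∈ G with g ≠ 1 and g² ≠ 1. Let x ∈ G \ H be a vertex of the relative g-noncommuting graph Γ^g_{H,G}. If exactly one of the conditions '∃ y ∈ H with y⁻¹xy = xg' and '∃ y ∈ H with y⁻¹xy = xg⁻¹' holds, then the degree of x equals |H| − |C_H(x)|; if both conditions hold, then the degree of x equals |H| − 2|C_H(x)|. -/
/-!
For `x ∉ H` the neighbours of `x` are the `y ∈ H` whose commutator `[x, y]` avoids `g` and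
`g⁻¹`, i.e. with `y⁻¹ x y ∉ {x g, x g⁻¹}`. These two targets differ because `g² ≠ 1`, and the
elements of `H` conjugating `x` to a fixed element form either the empty set or a right coset
of `C_H(x)`. Removing zero, one or two such cosets from `H` gives the degree.
-/

/-- The relative `g`-noncommuting graph of a group `G` with respect to a subgroup `H`:
vertices are the elements of `G`, and distinct `x`, `y` are adjacent iff
(`x ∈ H` or `y ∈ H`) and the commutator `x⁻¹ * y⁻¹ * x * y` is neither `g` nor `g⁻¹`. -/
def relGraph {G : Type*} [Group G] (H : Subgroup G) (g : G) : SimpleGraph G where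
  Adj x y := x ≠ y ∧ (x ∈ H ∨ y ∈ H) ∧ x⁻¹ * y⁻¹ * x * y ≠ g ∧ x⁻¹ * y⁻¹ * x * y ≠ g⁻¹
  symm := ⟨by
    rintro x y ⟨hxy, hmem, h1, h2⟩
    have key : (x⁻¹ * y⁻¹ * x * y)⁻¹ = y⁻¹ * x⁻¹ * y * x := by group
    refine ⟨hxy.symm, hmem.symm, fun h => h2 ?_, fun h => h1 ?_⟩
    · rw [← inv_inv (x⁻¹ * y⁻¹ * x * y), key, h]
    · rw [← inv_inv (x⁻¹ * y⁻¹ * x * y), key, h, inv_inv]⟩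
  loopless := ⟨fun x h => h.1 rfl⟩

namespace Subgroup

variable {G : Type*} [Group G]

def conjugatorsIn (H : Subgroup G) (x w : G) : Set G := {y | y ∈ H ∧ y⁻¹ * x * y = w}

theorem conjugatorsIn_self (H : Subgroup G) (x : G) :
    conjugatorsIn H x x = {y | y ∈ H ∧ x * y = y * x} := by
  ext y
  simp only [conjugatorsIn, Set.mem_ofPred_eq, mul_assoc, inv_mul_eq_iff_eq_mul]

theorem conjugatorsIn_eq_image_mul {H : Subgroup G} {x w z : G}
    (hz : z ∈ conjugatorsIn H x w) :
    conjugatorsIn H x w = (· * z) '' conjugatorsIn H x x := by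
  obtain ⟨hzH, hzw⟩ := hz
  ext y
  constructor
  · rintro ⟨hyH, hyw⟩
    refine ⟨y * z⁻¹, ⟨H.mul_mem hyH (H.inv_mem hzH), ?_⟩, by group⟩
    calc (y * z⁻¹)⁻¹ * x * (y * z⁻¹) = z * (y⁻¹ * x * y) * z⁻¹ := by group
      _ = x := by rw [hyw, ← hzw]; group
  · rintro ⟨u, ⟨huH, hux⟩, rfl⟩
    refine ⟨H.mul_mem huH hzH, ?_⟩
    calc (u * z)⁻¹ * x * (u * z) = z⁻¹ * (u⁻¹ * x * u) * z := by group
      _ = w := by rw [hux, hzw]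

theorem ncard_conjugatorsIn_of_exists {H : Subgroup G} {x w : G}
    (h : ∃ y ∈ H, y⁻¹ * x * y = w) :
    (conjugatorsIn H x w).ncard = {y | y ∈ H ∧ x * y = y * x}.ncard := by
  obtain ⟨z, hz⟩ := h
  rw [conjugatorsIn_eq_image_mul hz, Set.ncard_image_of_injective _ (mul_left_injective z),
    conjugatorsIn_self]

theorem ncard_conjugatorsIn_of_not_exists {H : Subgroup G} {x w : G}
    (h : ¬ ∃ y ∈ H, y⁻¹ * x * y = w) : (conjugatorsIn H x w).ncard = 0 := by
  have : H.conjugatorsIn x w = ∅ := Set.eq_empty_iff_forall_notMem.2 fun y hy ↦ h ⟨y, hy⟩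
  rw [this, Set.ncard_empty]

end Subgroup

section relGraph

variable {G : Type*} [Group G]

open Subgroup

theorem commutator_eq_iff_conj_eq (x y c : G) :
    x⁻¹ * y⁻¹ * x * y = c ↔ y⁻¹ * x * y = x * c := by
  rw [← inv_mul_eq_iff_eq_mul, mul_assoc, mul_assoc, mul_assoc]

theorem neighborSet_relGraph_of_notMem {H : Subgroup G} {x : G} (g : G) (hx : x ∉ H) :
    (relGraph H g).neighborSet x =
      (H : Set G) \ (conjugatorsIn H x (x * g) ∪ conjugatorsIn H x (x * g⁻¹)) := by
  ext y
  simp only [SimpleGraph.mem_neighborSet, relGraph, conjugatorsIn, ne_eq,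
    commutator_eq_iff_conj_eq, Set.mem_sdiff, Set.mem_union, Set.mem_ofPred_eq, SetLike.mem_coe]
  constructor
  · rintro ⟨-, hmem, hg, hg'⟩
    exact ⟨hmem.resolve_left hx, by tauto⟩
  · rintro ⟨hyH, hy⟩
    exact ⟨fun hxy ↦ hx (hxy ▸ hyH), Or.inr hyH, by tauto⟩

theorem cast_ncard_neighborSet_relGraph_of_notMem [Finite G] {H : Subgroup G} {x g : G}
    (hx : x ∉ H) (hg : g ^ 2 ≠ 1) :
    (((relGraph H g).neighborSet x).ncard : ℤ) = Nat.card H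
      - (conjugatorsIn H x (x * g)).ncard - (conjugatorsIn H x (x * g⁻¹)).ncard := by
  have hne : x * g ≠ x * g⁻¹ := fun h ↦ hg <| by
    rw [pow_two]
    exact mul_eq_one_iff_eq_inv.2 (mul_left_cancel h)
  have hdisj : Disjoint (conjugatorsIn H x (x * g)) (conjugatorsIn H x (x * g⁻¹)) :=
    Set.disjoint_left.2 fun _ hy hy' ↦ hne (hy.2.symm.trans hy'.2)
  have hsub : conjugatorsIn H x (x * g) ∪ conjugatorsIn H x (x * g⁻¹) ⊆ H :=
    Set.union_subset (fun _ hy ↦ hy.1) (fun _ hy ↦ hy.1)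
  rw [neighborSet_relGraph_of_notMem g hx, Set.cast_ncard_sdiff hsub (Set.toFinite _),
    Set.ncard_union_eq hdisj, ← Nat.card_coe_set_eq]
  push_cast
  ring

end relGraph

open Subgroup in
theorem stmt5_general {G : Type*} [Group G] [Fintype G]
    (H : Subgroup G) (g : G) (hg2 : g ^ 2 ≠ 1)
    (x : G) (hx : x ∉ H) :
    (((∃ y ∈ H, y⁻¹ * x * y = x * g) ∧ ¬ (∃ y ∈ H, y⁻¹ * x * y = x * g⁻¹)) ∨
     ((¬ ∃ y ∈ H, y⁻¹ * x * y = x * g) ∧ (∃ y ∈ H, y⁻¹ * x * y = x * g⁻¹)) →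
       (((relGraph H g).neighborSet x).ncard : ℤ)
         = (Nat.card H : ℤ) - ({y : G | y ∈ H ∧ x * y = y * x}.ncard : ℤ)) ∧
    ((∃ y ∈ H, y⁻¹ * x * y = x * g) ∧ (∃ y ∈ H, y⁻¹ * x * y = x * g⁻¹) →
       (((relGraph H g).neighborSet x).ncard : ℤ)
         = (Nat.card H : ℤ) - 2 * ({y : G | y ∈ H ∧ x * y = y * x}.ncard : ℤ)) := by
  rw [cast_ncard_neighborSet_relGraph_of_notMem hx hg2]
  constructor
  · rintro (⟨hg, hg'⟩ | ⟨hg, hg'⟩)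
    · rw [ncard_conjugatorsIn_of_exists hg, ncard_conjugatorsIn_of_not_exists hg']
      ring
    · rw [ncard_conjugatorsIn_of_not_exists hg, ncard_conjugatorsIn_of_exists hg']
      ring
  · rintro ⟨hg, hg'⟩
    rw [ncard_conjugatorsIn_of_exists hg, ncard_conjugatorsIn_of_exists hg']
    ring

theorem stmt5 {G : Type*} [Group G] [Fintype G]
    (hG : ¬ ∀ a b : G, a * b = b * a)
    (H : Subgroup G) (g : G) (hg1 : g ≠ 1) (hg2 : g ^ 2 ≠ 1)
    (x : G) (hx : x ∉ H) :
    (((∃ y ∈ H, y⁻¹ * x * y = x * g) ∧ ¬ (∃ y ∈ H, y⁻¹ * x * y = x * g⁻¹)) ∨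
     ((¬ ∃ y ∈ H, y⁻¹ * x * y = x * g) ∧ (∃ y ∈ H, y⁻¹ * x * y = x * g⁻¹)) →
       (((relGraph H g).neighborSet x).ncard : ℤ)
         = (Nat.card H : ℤ) - ({y : G | y ∈ H ∧ x * y = y * x}.ncard : ℤ)) ∧
    ((∃ y ∈ H, y⁻¹ * x * y = x * g) ∧ (∃ y ∈ H, y⁻¹ * x * y = x * g⁻¹) →
       (((relGraph H g).neighborSet x).ncard : ℤ)
         = (Nat.card H : ℤ) - 2 * ({y : G | y ∈ H ∧ x * y = y * x}.ncard : ℤ)) :=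
  stmt5_general H g hg2 x hx
end

section
/- Let G be a finite non-abelian group, H a non-trivial subgroup of G with H ≠ Z(H,G), and g = 1. Then twice the number of edges of the relative g-noncommuting graph Γ^g_{H,G} equals 2(|H||G| − N₁(H,G)) − (|H|² − N₁(H)), where N₁(H,G) = |{(x,y) ∈ H × G : [x,y] = 1}| and N₁(H) = |{(x,y) ∈ H × H : [x,y] = 1}|. -/
/-!
For `g = 1` the commutator condition says exactly that `x` and `y` do not commute, which already
forces `x ≠ y`; so the ordered pairs of adjacent vertices are the non-commuting pairs with a
coordinate in `H`. Inclusion–exclusion over "first coordinate in `H`" and "second coordinate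
in `H`", two conditions exchanged by swapping the pair, gives the count.
-/

open Set

theorem SimpleGraph.two_mul_ncard_edgeSet {V : Type*} [Finite V] (Γ : SimpleGraph V) :
    2 * Γ.edgeSet.ncard = {p : V × V | Γ.Adj p.1 p.2}.ncard := by
  classical
  have := Fintype.ofFinite V
  rw [← Γ.coe_edgeFinset, ncard_coe_finset, Γ.two_mul_card_edgeFinset, ← ncard_coe_finset]
  simp

theorem Set.cast_ncard_setOf_and_not {α : Type*} [Finite α] (P Q : α → Prop) :
    ({a | P a ∧ ¬ Q a}.ncard : ℤ) = {a | P a}.ncard - {a | P a ∧ Q a}.ncard := by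
  rw [← cast_ncard_sdiff (fun a ha => ha.1) (toFinite _)]
  congr 2
  ext a
  simp only [mem_ofPred_eq, mem_sdiff, not_and]
  tauto

section
variable {G : Type*} [Group G]

theorem inv_mul_inv_mul_mul_eq_one_iff_commute {x y : G} :
    x⁻¹ * y⁻¹ * x * y = 1 ↔ Commute x y := by
  rw [show x⁻¹ * y⁻¹ * x * y = (y * x)⁻¹ * (x * y) by group, inv_mul_eq_one, eq_comm]
  rfl

theorem relGraph_one_adj_iff (H : Subgroup G) {x y : G} :
    (relGraph H 1).Adj x y ↔ (x ∈ H ∨ y ∈ H) ∧ ¬ Commute x y := by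
  simp only [relGraph, inv_one, and_self, ne_eq, inv_mul_inv_mul_mul_eq_one_iff_commute]
  refine ⟨fun h => h.2, fun h => ⟨?_, h⟩⟩
  rintro rfl
  exact h.2 (Commute.refl x)

variable [Finite G] (H : Subgroup G)

theorem cast_ncard_fst_mem_not_commute :
    ({p : G × G | p.1 ∈ H ∧ ¬ Commute p.1 p.2}.ncard : ℤ)
      = Nat.card H * Nat.card G - {p : G × G | p.1 ∈ H ∧ Commute p.1 p.2}.ncard := by
  have hprod : {p : G × G | p.1 ∈ H} = (H : Set G) ×ˢ univ := by ext; simp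
  rw [cast_ncard_setOf_and_not, hprod, ncard_prod, ncard_univ, Nat.cast_mul]
  rfl

theorem cast_ncard_mem_mem_not_commute :
    ({p : G × G | p.1 ∈ H ∧ p.2 ∈ H ∧ ¬ Commute p.1 p.2}.ncard : ℤ)
      = Nat.card H ^ 2 - {p : G × G | p.1 ∈ H ∧ p.2 ∈ H ∧ Commute p.1 p.2}.ncard := by
  have hprod : {p : G × G | p.1 ∈ H ∧ p.2 ∈ H} = (H : Set G) ×ˢ (H : Set G) := rfl
  simp_rw [← and_assoc]
  rw [cast_ncard_setOf_and_not, hprod, ncard_prod, sq, Nat.cast_mul]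
  rfl

theorem two_mul_ncard_edgeSet_relGraph_one :
    (2 * (relGraph H 1).edgeSet.ncard : ℤ)
      = 2 * {p : G × G | p.1 ∈ H ∧ ¬ Commute p.1 p.2}.ncard
        - {p : G × G | p.1 ∈ H ∧ p.2 ∈ H ∧ ¬ Commute p.1 p.2}.ncard := by
  set A := {p : G × G | p.1 ∈ H ∧ ¬ Commute p.1 p.2}
  have hunion : A ∪ Prod.swap ⁻¹' A = {p : G × G | (relGraph H 1).Adj p.1 p.2} := by
    ext p
    simp only [A, mem_union, mem_preimage, mem_ofPred_eq, Prod.fst_swap, Prod.snd_swap,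
      relGraph_one_adj_iff, Commute.symm_iff (a := p.2)]
    tauto
  have hinter : A ∩ Prod.swap ⁻¹' A = {p : G × G | p.1 ∈ H ∧ p.2 ∈ H ∧ ¬ Commute p.1 p.2} := by
    ext p
    simp only [A, mem_inter_iff, mem_preimage, mem_ofPred_eq, Prod.fst_swap, Prod.snd_swap,
      Commute.symm_iff (a := p.2)]
    tauto
  have := ncard_union_add_ncard_inter A (Prod.swap ⁻¹' A)
  rw [ncard_preimage_of_injective_subset_range Prod.swap_injective
    (fun p _ => ⟨p.swap, p.swap_swap⟩), hunion, hinter,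
    ← SimpleGraph.two_mul_ncard_edgeSet] at this
  omega

end

theorem stmt16_general {G : Type*} [Group G] [Fintype G]
    (H : Subgroup G) :
    2 * (((relGraph H (1 : G)).edgeSet.ncard : ℤ))
      = 2 * ((Nat.card H : ℤ) * (Nat.card G : ℤ)
            - ({p : G × G | p.1 ∈ H ∧ p.1⁻¹ * p.2⁻¹ * p.1 * p.2 = 1}.ncard : ℤ))
        - ((Nat.card H : ℤ) ^ 2
            - ({p : G × G | p.1 ∈ H ∧ p.2 ∈ H ∧ p.1⁻¹ * p.2⁻¹ * p.1 * p.2 = 1}.ncard : ℤ)) := by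
  simp only [inv_mul_inv_mul_mul_eq_one_iff_commute]
  rw [← cast_ncard_fst_mem_not_commute, ← cast_ncard_mem_mem_not_commute,
    two_mul_ncard_edgeSet_relGraph_one]

theorem stmt16 {G : Type*} [Group G] [Fintype G]
    (hG : ¬ ∀ a b : G, a * b = b * a)
    (H : Subgroup G) (hH : H ≠ ⊥)
    (hHZ : (H : Set G) ≠ {x : G | x ∈ H ∧ ∀ y : G, x * y = y * x}) :
    2 * (((relGraph H (1 : G)).edgeSet.ncard : ℤ))
      = 2 * ((Nat.card H : ℤ) * (Nat.card G : ℤ)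
            - ({p : G × G | p.1 ∈ H ∧ p.1⁻¹ * p.2⁻¹ * p.1 * p.2 = 1}.ncard : ℤ))
        - ((Nat.card H : ℤ) ^ 2
            - ({p : G × G | p.1 ∈ H ∧ p.2 ∈ H ∧ p.1⁻¹ * p.2⁻¹ * p.1 * p.2 = 1}.ncard : ℤ)) :=
  stmt16_general H
end
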